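/- The number of spanning trees of the complete graph on p ≥ 1 labeled vertices is p^{p-2}. -/

import Mathlib

/-!
Joyal's proof. A map `g : S → S` permutes its set `P` of periodic points, and away from `P` it is
the parent map of a forest whose roots are the points of `P`. A vertebrate, that is a tree with a
marked head and a marked root, splits in the same way into its spine, the path from head to root
(a linear ordering of some set `M` of vertices), and a forest whose roots are the points of `M`.
A set has as many permutations as linear orderings, so there are as many vertebrates as maps
`S → S`, namely `n ^ n`; each tree carries `n ^ 2` vertebrates, hence there are `n ^ (n - 2)` trees.
A tree is encoded by its parent map towards a fixed root.
-/

open Function Set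

namespace Function

variable {S : Type*} {f g h : S → S} {P R : Set S} {x : S}

/-- `f` sends every vertex of a forest with set of roots `R` to its parent, and fixes the roots. -/
def IsRootedForest (R : Set S) (f : S → S) : Prop :=
  (∀ x ∈ R, f x = x) ∧ ∀ x, ∃ k, f^[k] x ∈ R

theorem iterate_eq_of_eqOn_compl (hgh : EqOn g h Pᶜ) {k : ℕ} (hk : ∀ j < k, g^[j] x ∉ P) :
    g^[k] x = h^[k] x := by
  induction k with
  | zero => rfl
  | succ k ih =>
    rw [iterate_succ_apply', iterate_succ_apply', ← ih fun j hj => hk j (by omega)]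
    exact hgh (hk k k.lt_succ_self)

theorem exists_iterate_mem_of_eqOn_compl (hgh : EqOn g h Pᶜ) (hx : ∃ k, g^[k] x ∈ P) :
    ∃ k, h^[k] x ∈ P := by
  classical
  refine ⟨Nat.find hx, ?_⟩
  rw [← iterate_eq_of_eqOn_compl hgh fun j hj => Nat.find_min hx hj]
  exact Nat.find_spec hx

theorem exists_iterate_mem_periodicPts [Finite S] (f : S → S) (x : S) :
    ∃ k, f^[k] x ∈ periodicPts f := by
  obtain ⟨i, j, hne, hij⟩ := Finite.exists_ne_map_eq_of_infinite (f^[·] x)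
  wlog hlt : i < j generalizing i j
  · exact this j i hne.symm hij.symm (by omega)
  refine ⟨i, mk_mem_periodicPts (Nat.sub_pos_of_lt hlt) ?_⟩
  change f^[j - i] (f^[i] x) = f^[i] x
  rw [← iterate_add_apply, Nat.sub_add_cancel hlt.le]
  exact hij.symm

theorem periodicPts_subset_of_mapsTo (hP : MapsTo f P P) (hreach : ∀ x, ∃ k, f^[k] x ∈ P) :
    periodicPts f ⊆ P := by
  rintro x ⟨n, hn, hx⟩
  obtain ⟨k, hk⟩ := hreach x
  have hkn : k ≤ k * n := Nat.le_mul_of_pos_right k hn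
  have := hP.iterate (k * n - k) hk
  rwa [← iterate_add_apply, Nat.sub_add_cancel hkn, (hx.const_mul k).eq] at this

theorem periodicPts_nonempty [Finite S] [Nonempty S] (f : S → S) : (periodicPts f).Nonempty :=
  let ⟨_, hk⟩ := exists_iterate_mem_periodicPts f (Classical.arbitrary S)
  ⟨_, hk⟩

theorem periodicPts_eq_of_injOn [Finite P] (hmaps : MapsTo f P P) (hinj : InjOn f P)
    (hreach : ∀ x, ∃ k, f^[k] x ∈ P) : periodicPts f = P := by
  refine (periodicPts_subset_of_mapsTo hmaps hreach).antisymm fun x hx => ?_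
  have hsemi : Semiconj Subtype.val (hmaps.restrict f P P) f := fun _ => rfl
  exact hsemi.mapsTo_periodicPts ((hmaps.restrict_inj.2 hinj).mem_periodicPts ⟨x, hx⟩)

theorem IsRootedForest.periodicPts_eq (hf : IsRootedForest R f) : periodicPts f = R :=
  (periodicPts_subset_of_mapsTo (fun x hx => (hf.1 x hx).symm ▸ hx) hf.2).antisymm
    fun x hx => mk_mem_periodicPts one_pos (IsFixedPt.isPeriodicPt (hf.1 x hx) 1)

open Classical in
noncomputable def glue (P : Set S) (u : P → S) (h : S → S) : S → S :=
  fun x => if hx : x ∈ P then u ⟨x, hx⟩ else h x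

section Glue

variable {u : P → S}

theorem glue_of_mem (hx : x ∈ P) : glue P u h x = u ⟨x, hx⟩ := dif_pos hx

@[simp]
theorem glue_coe (y : P) : glue P u h y = u y := glue_of_mem y.2

theorem glue_of_notMem (hx : x ∉ P) : glue P u h x = h x := dif_neg hx

theorem eqOn_glue_compl : EqOn h (glue P u h) Pᶜ := fun _ hx => (glue_of_notMem hx).symm

theorem glue_glue_right (v : P → S) : glue P u (glue P v h) = glue P u h := by
  funext x
  by_cases hx : x ∈ P
  · rw [glue_of_mem hx, glue_of_mem hx]
  · rw [glue_of_notMem hx, glue_of_notMem hx, glue_of_notMem hx]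

theorem isRootedForest_glue_val (g : S → S) (hg : ∀ x, ∃ k, g^[k] x ∈ P) :
    IsRootedForest P (glue P Subtype.val g) :=
  ⟨fun _ hx => glue_of_mem hx, fun x => exists_iterate_mem_of_eqOn_compl eqOn_glue_compl (hg x)⟩

theorem IsRootedForest.glue_val_eq (hh : IsRootedForest P h) : glue P Subtype.val h = h := by
  funext x
  by_cases hx : x ∈ P
  · rw [glue_of_mem hx, hh.1 x hx]
  · exact glue_of_notMem hx

end Glue

theorem IsRootedForest.periodicPts_glue_perm [Finite P] (hh : IsRootedForest P h)
    (σ : Equiv.Perm P) : periodicPts (glue P (fun x => σ x) h) = P := by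
  refine periodicPts_eq_of_injOn (fun x hx => ?_) (fun x hx y hy hxy => ?_)
    fun x => exists_iterate_mem_of_eqOn_compl eqOn_glue_compl (hh.2 x)
  · rw [glue_of_mem hx]
    exact (σ _).2
  · rw [glue_of_mem hx, glue_of_mem hy] at hxy
    exact congrArg Subtype.val (σ.injective (Subtype.ext hxy))

noncomputable def periodicPtsFiberEquiv [Finite S] (P : Set S) :
    {g : S → S // periodicPts g = P} ≃ Equiv.Perm P × {h : S → S // IsRootedForest P h} where
  toFun g := ((g.2 ▸ bijOn_periodicPts g.1).equiv g.1,
    ⟨glue P Subtype.val g,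
      isRootedForest_glue_val g fun x => g.2 ▸ exists_iterate_mem_periodicPts g.1 x⟩)
  invFun σh := ⟨glue P (fun x => σh.1 x) σh.2, σh.2.2.periodicPts_glue_perm σh.1⟩
  left_inv g := by
    ext x
    dsimp only
    rw [glue_glue_right]
    by_cases hx : x ∈ P
    · rw [glue_of_mem hx]; rfl
    · rw [glue_of_notMem hx]
  right_inv σh := by
    obtain ⟨σ, h, hh⟩ := σh
    refine Prod.ext (Equiv.ext fun y => Subtype.ext ?_) (Subtype.ext ?_)
    · exact glue_coe (u := fun x => (σ x : S)) y
    change glue P Subtype.val (glue P (fun x => (σ x : S)) h) = h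
    rw [glue_glue_right, hh.glue_val_eq]

section SingleRoot

variable {r a : S} {t : ℕ}

theorem IsRootedForest.apply_apply_ne (hf : IsRootedForest {r} f) (hx : x ≠ r) :
    f (f x) ≠ x := fun h =>
  hx <| mem_singleton_iff.1 <| hf.periodicPts_eq ▸ mk_mem_periodicPts two_pos h

theorem IsRootedForest.apply_ne (hf : IsRootedForest {r} f) (hx : x ≠ r) : f x ≠ x := fun h =>
  hf.apply_apply_ne hx (by rw [h, h])

theorem IsRootedForest.injOn_iterate (hf : IsRootedForest {r} f) (hmin : ∀ i < t, f^[i] a ≠ r) :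
    InjOn (f^[·] a) (Iic t) := by
  suffices ∀ i j, i < j → j ≤ t → f^[i] a ≠ f^[j] a by
    intro i hi j hj hij
    by_contra hne
    rcases Nat.lt_or_gt_of_ne hne with hlt | hlt
    · exact this i j hlt hj hij
    · exact this j i hlt hi hij.symm
  intro i j hij hjt heq
  have hper : f^[i] a ∈ periodicPts f := by
    refine mk_mem_periodicPts (Nat.sub_pos_of_lt hij) ?_
    change f^[j - i] (f^[i] a) = f^[i] a
    rw [← iterate_add_apply, Nat.sub_add_cancel hij.le, heq]
  rw [hf.periodicPts_eq] at hper
  exact hmin i (by omega) hper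

theorem IsRootedForest.card_range_iterate (hf : IsRootedForest {r} f) (ht : f^[t] a = r)
    (hmin : ∀ i < t, f^[i] a ≠ r) : Nat.card (range (f^[·] a)) = t + 1 := by
  rw [← Nat.card_fin (t + 1)]
  refine (Nat.card_eq_of_bijective (fun i => ⟨f^[i] a, mem_range_self _⟩)
    ⟨fun i j hij => ?_, ?_⟩).symm
  · exact Fin.ext (hf.injOn_iterate hmin (Nat.lt_succ_iff.1 i.2) (Nat.lt_succ_iff.1 j.2)
      (congrArg Subtype.val hij))
  · rintro ⟨_, j, rfl⟩
    refine ⟨⟨min j t, by omega⟩, Subtype.ext ?_⟩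
    rcases le_total j t with hjt | htj
    · simp [hjt]
    · simp only [min_eq_right htj]
      rw [ht, ← Nat.sub_add_cancel htj, iterate_add_apply, ht]
      exact (iterate_fixed (hf.1 r rfl) _).symm

end SingleRoot

end Function

/-- A tree, given by its parent map towards `root`, with a marked vertex `head`. -/
@[ext]
structure Vertebrate (S : Type*) where
  head : S
  root : S
  parent : S → S
  isRootedForest : IsRootedForest {root} parent

namespace Vertebrate

variable {S : Type*}

def spine (v : Vertebrate S) : Set S := range (v.parent^[·] v.head)

theorem exists_card_spine_eq_succ (v : Vertebrate S) : ∃ t, Nat.card v.spine = t + 1 ∧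
    v.parent^[t] v.head = v.root ∧ InjOn (v.parent^[·] v.head) (Iic t) := by
  classical
  have hex := v.isRootedForest.2 v.head
  refine ⟨Nat.find hex, v.isRootedForest.card_range_iterate (Nat.find_spec hex)
    fun _ => Nat.find_min hex, Nat.find_spec hex,
    v.isRootedForest.injOn_iterate fun _ => Nat.find_min hex⟩

variable {M : Set S} {k : ℕ}

/-- The parent map of the path `e 0 → e 1 → ⋯ → e (k - 1)`, rooted at its last vertex, continued
by `h` off `M`. -/
noncomputable def spineParent (e : Fin k ≃ M) (h : S → S) : S → S :=
  glue M (fun x => e ⟨min (e.symm x + 1) (k - 1), by have := (e.symm x).2; omega⟩) h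

theorem spineParent_apply (e : Fin k ≃ M) (h : S → S) (i : Fin k) :
    spineParent e h (e i) = (e ⟨min (i + 1) (k - 1), by have := i.2; omega⟩ : S) := by
  simp only [spineParent, glue_coe, Equiv.symm_apply_apply]

theorem spineParent_iterate (e : Fin k ≃ M) (h : S → S) (i : Fin k) (j : ℕ) :
    (spineParent e h)^[j] (e i) = (e ⟨min (i + j) (k - 1), by have := i.2; omega⟩ : S) := by
  induction j with
  | zero => simp [min_eq_left (Nat.le_sub_one_of_lt i.2)]
  | succ j ih =>
    rw [iterate_succ_apply', ih, spineParent_apply]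
    congr 3
    dsimp only
    omega

theorem isRootedForest_spineParent {h : S → S} (hh : IsRootedForest M h) (e : Fin k ≃ M)
    (hk : 0 < k) : IsRootedForest {(e ⟨k - 1, by omega⟩ : S)} (spineParent e h) := by
  have hreach : ∀ x ∈ M, (spineParent e h)^[k - 1] x = e ⟨k - 1, by omega⟩ := by
    intro x hx
    rw [← Subtype.coe_mk x hx, ← e.apply_symm_apply ⟨x, hx⟩, spineParent_iterate]
    congr 3
    omega
  refine ⟨fun x hx => ?_, fun x => ?_⟩
  · rw [mem_singleton_iff.1 hx, spineParent_apply]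
    congr 3
    simp
  · obtain ⟨m, hm⟩ : ∃ m, (spineParent e h)^[m] x ∈ M :=
      exists_iterate_mem_of_eqOn_compl eqOn_glue_compl (hh.2 x)
    exact ⟨k - 1 + m, by rw [iterate_add_apply, hreach _ hm]; rfl⟩

theorem spine_spineParent {h : S → S} (e : Fin k ≃ M) (hk : 0 < k) :
    range ((spineParent e h)^[·] (e ⟨0, hk⟩)) = M := by
  refine Subset.antisymm ?_ fun x hx => ⟨e.symm ⟨x, hx⟩, ?_⟩
  · rintro _ ⟨j, rfl⟩
    dsimp only
    rw [spineParent_iterate]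
    exact Subtype.prop _
  · dsimp only
    rw [spineParent_iterate]
    simp [min_eq_left (Nat.le_sub_one_of_lt (e.symm ⟨x, hx⟩).2)]

theorem iterate_head_mem {v : Vertebrate S} (hv : v.spine = M) (i : ℕ) :
    v.parent^[i] v.head ∈ M :=
  hv ▸ mem_range_self i

theorem exists_iterate_mem_of_spine_eq {v : Vertebrate S} (hv : v.spine = M) (x : S) :
    ∃ k, v.parent^[k] x ∈ M := by
  subst hv
  obtain ⟨k, hk⟩ := v.isRootedForest.2 x
  obtain ⟨t, -, ht, -⟩ := v.exists_card_spine_eq_succ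
  exact ⟨k, ⟨t, ht.trans (mem_singleton_iff.1 hk).symm⟩⟩

theorem bijective_iterate_head [Finite S] {v : Vertebrate S} (hv : v.spine = M) :
    Bijective fun i : Fin (Nat.card M) => (⟨v.parent^[i] v.head, iterate_head_mem hv i⟩ : M) := by
  obtain ⟨t, hcard, -, hinj⟩ := v.exists_card_spine_eq_succ
  rw [hv] at hcard
  refine (Nat.bijective_iff_injective_and_card _).2 ⟨fun i j hij => Fin.ext ?_, Nat.card_fin _⟩
  refine hinj ?_ ?_ (congrArg Subtype.val hij) <;> simp only [mem_Iic] <;> omega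

theorem iterate_card_sub_one {v : Vertebrate S} (hv : v.spine = M) :
    v.parent^[Nat.card M - 1] v.head = v.root := by
  obtain ⟨t, hcard, ht, -⟩ := v.exists_card_spine_eq_succ
  rwa [← hv, hcard, Nat.add_sub_cancel]

theorem parent_iterate_head {v : Vertebrate S} (hv : v.spine = M) {i : ℕ} (hi : i < Nat.card M) :
    v.parent (v.parent^[i] v.head) = v.parent^[min (i + 1) (Nat.card M - 1)] v.head := by
  rcases Nat.lt_or_ge (i + 1) (Nat.card M) with hi' | hi'
  · rw [min_eq_left (by omega), iterate_succ_apply']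
  · rw [min_eq_right (by omega), show i = Nat.card M - 1 by omega, iterate_card_sub_one hv]
    exact v.isRootedForest.1 _ rfl

theorem spineParent_ofBijective [Finite S] {v : Vertebrate S} (hv : v.spine = M) :
    spineParent (Equiv.ofBijective _ (bijective_iterate_head hv)) (glue M Subtype.val v.parent) =
      v.parent := by
  set e := Equiv.ofBijective _ (bijective_iterate_head hv)
  funext x
  rw [spineParent, glue_glue_right]
  by_cases hx : x ∈ M
  · obtain ⟨i, hi⟩ := e.surjective ⟨x, hx⟩
    rw [← show (e i : S) = x from congrArg Subtype.val hi]
    simp only [glue_coe, Equiv.symm_apply_apply]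
    exact (parent_iterate_head hv i.2).symm
  · exact glue_of_notMem hx

noncomputable def spineFiberEquiv [Finite S] (M : Set S) (hM : M.Nonempty) :
    {v : Vertebrate S // v.spine = M} ≃
      (Fin (Nat.card M) ≃ M) × {h : S → S // IsRootedForest M h} :=
  have : Nonempty M := hM.to_subtype
  have hk : 0 < Nat.card M := Nat.card_pos
  { toFun := fun v =>
      (Equiv.ofBijective _ (bijective_iterate_head v.2),
        ⟨glue M Subtype.val v.1.parent,
          isRootedForest_glue_val _ (exists_iterate_mem_of_spine_eq v.2)⟩)
    invFun := fun eh =>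
      ⟨⟨eh.1 ⟨0, hk⟩, eh.1 ⟨Nat.card M - 1, by omega⟩, spineParent eh.1 eh.2,
        isRootedForest_spineParent eh.2.2 eh.1 hk⟩, spine_spineParent eh.1 hk⟩
    left_inv := fun v => Subtype.ext (Vertebrate.ext rfl (iterate_card_sub_one v.2)
      (spineParent_ofBijective v.2))
    right_inv := by
      rintro ⟨e, h, hh⟩
      refine Prod.ext (Equiv.ext fun i => Subtype.ext ?_) (Subtype.ext ?_)
      · change (spineParent e h)^[i] (e ⟨0, hk⟩) = e i
        rw [spineParent_iterate]
        congr 2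
        ext
        simp only [zero_add]
        omega
      · change glue M Subtype.val (spineParent e h) = h
        rw [spineParent, glue_glue_right, hh.glue_val_eq] }

end Vertebrate

section Joyal

variable {S : Type*} [Finite S] [Nonempty S]

noncomputable def periodicPtsFiberEquivSpineFiber (M : Set S) :
    {g : S → S // periodicPts g = M} ≃ {v : Vertebrate S // v.spine = M} := by
  by_cases hM : M.Nonempty
  · exact (periodicPtsFiberEquiv M).trans <|
      (Equiv.prodCongr ((Finite.equivFin M).equivCongr (Equiv.refl M)) (Equiv.refl _)).trans
        (Vertebrate.spineFiberEquiv M hM).symm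
  · rw [not_nonempty_iff_eq_empty] at hM
    subst hM
    have : IsEmpty {g : S → S // periodicPts g = ∅} :=
      ⟨fun g => (periodicPts_nonempty g.1).ne_empty g.2⟩
    have : IsEmpty {v : Vertebrate S // v.spine = ∅} :=
      ⟨fun v => by simpa using Vertebrate.iterate_head_mem v.2 0⟩
    exact Equiv.equivOfIsEmpty _ _

noncomputable def joyalEquiv : (S → S) ≃ Vertebrate S :=
  (Equiv.sigmaFiberEquiv periodicPts).symm.trans <|
    (Equiv.sigmaCongrRight periodicPtsFiberEquivSpineFiber).trans
      (Equiv.sigmaFiberEquiv Vertebrate.spine)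

theorem Vertebrate.card_eq_card_pow_card : Nat.card (Vertebrate S) = Nat.card S ^ Nat.card S := by
  rw [← Nat.card_congr joyalEquiv, Nat.card_fun]

end Joyal

namespace SimpleGraph

variable {V : Type*} {f g : V → V} {z : V}

def ofParentMap (f : V → V) : SimpleGraph V := fromRel fun x y => f x = y

theorem ofParentMap_adj {x y : V} : (ofParentMap f).Adj x y ↔ x ≠ y ∧ (f x = y ∨ f y = x) :=
  fromRel_adj ..

theorem reachable_ofParentMap_iterate (f : V → V) (x : V) (k : ℕ) :
    (ofParentMap f).Reachable x (f^[k] x) := by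
  induction k with
  | zero => rfl
  | succ k ih =>
    rw [iterate_succ_apply']
    refine ih.trans ?_
    by_cases h : f^[k] x = f (f^[k] x)
    · rw [← h]
    · exact (ofParentMap_adj.2 ⟨h, Or.inl rfl⟩).reachable

theorem _root_.Function.IsRootedForest.connected_ofParentMap (hf : IsRootedForest {z} f) :
    (ofParentMap f).Connected :=
  (connected_iff_exists_forall_reachable _).2 ⟨z, fun x => by
    obtain ⟨k, hk⟩ := hf.2 x
    rw [mem_singleton_iff] at hk
    exact (hk ▸ reachable_ofParentMap_iterate f x k).symm⟩

theorem _root_.Function.IsRootedForest.card_edgeSet_ofParentMap [Finite V]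
    (hf : IsRootedForest {z} f) : Nat.card (ofParentMap f).edgeSet + 1 = Nat.card V := by
  let φ : {x // x ≠ z} → (ofParentMap f).edgeSet := fun x =>
    ⟨s(x, f x), ofParentMap_adj.2 ⟨(hf.apply_ne x.2).symm, Or.inl rfl⟩⟩
  have hφ : Bijective φ := by
    refine ⟨fun x y hxy => Subtype.ext ?_, ?_⟩
    · rcases Sym2.eq_iff.1 (congrArg Subtype.val hxy) with ⟨h, -⟩ | ⟨h₁, h₂⟩
      · exact h
      · exact absurd (by rw [h₂, h₁]) (hf.apply_apply_ne x.2)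
    · rintro ⟨e, he⟩
      induction e using Sym2.ind with
      | h u v =>
      obtain ⟨huv, h | h⟩ := ofParentMap_adj.1 he
      · refine ⟨⟨u, fun hu => huv ?_⟩, Subtype.ext ?_⟩
        · rw [← h, hu, hf.1 z rfl]
        · simp [φ, h]
      · refine ⟨⟨v, fun hv => huv ?_⟩, Subtype.ext ?_⟩
        · rw [← h, hv, hf.1 z rfl]
        · simp [φ, h, Sym2.eq_swap]
  classical
  rw [← Nat.card_eq_of_bijective φ hφ, ← Finite.card_option,
    Nat.card_congr (Equiv.optionSubtypeNe z)]

theorem _root_.Function.IsRootedForest.isTree_ofParentMap [Finite V]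
    (hf : IsRootedForest {z} f) : (ofParentMap f).IsTree :=
  isTree_iff_connected_and_card.2 ⟨hf.connected_ofParentMap, hf.card_edgeSet_ofParentMap⟩

theorem _root_.Function.IsRootedForest.eq_of_ofParentMap_eq (hf : IsRootedForest {z} f)
    (hg : IsRootedForest {z} g) (h : ofParentMap f = ofParentMap g) : f = g := by
  suffices ∀ n v, f^[n] v = z → f v = g v by
    funext v
    obtain ⟨n, hn⟩ := hf.2 v
    exact this n v hn
  intro n
  induction n using Nat.strong_induction_on with
  | _ n ih =>
  intro v hn
  by_cases hv : v = z
  · rw [hv, hf.1 z rfl, hg.1 z rfl]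
  obtain ⟨m, rfl⟩ : ∃ m, n = m + 1 := Nat.exists_eq_succ_of_ne_zero (by rintro rfl; exact hv hn)
  have hfv : f (f v) = g (f v) := ih m m.lt_succ_self (f v) hn
  have hadj : (ofParentMap g).Adj v (f v) :=
    h ▸ ofParentMap_adj.2 ⟨(hf.apply_ne hv).symm, Or.inl rfl⟩
  rcases (ofParentMap_adj.1 hadj).2 with hgv | hgv
  · exact hgv.symm
  · exact absurd (hfv.trans hgv) (hf.apply_apply_ne hv)

theorem Connected.exists_isRootedForest_ofParentMap_le {G : SimpleGraph V} (hG : G.Connected)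
    (z : V) : ∃ f, IsRootedForest {z} f ∧ ofParentMap f ≤ G := by
  have hcloser : ∀ v, v ≠ z → ∃ w, G.Adj v w ∧ G.dist w z < G.dist v z := by
    intro v hv
    obtain ⟨p, hp⟩ := hG.exists_walk_length_eq_dist v z
    cases p with
    | nil => exact absurd rfl hv
    | cons hadj q =>
      refine ⟨_, hadj, ?_⟩
      have := dist_le q
      rw [Walk.length_cons] at hp
      omega
  choose parent hadj hlt using hcloser
  classical
  let f v := if hv : v = z then z else parent v hv
  refine ⟨f, ⟨fun x hx => by simp [f, mem_singleton_iff.1 hx], fun v => ?_⟩, fun x y hxy => ?_⟩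
  · induction hd : G.dist v z using Nat.strong_induction_on generalizing v with
    | _ d ih =>
    by_cases hv : v = z
    · exact ⟨0, hv⟩
    obtain ⟨k, hk⟩ := ih _ (hd ▸ hlt v hv) (parent v hv) rfl
    refine ⟨k + 1, ?_⟩
    rwa [iterate_succ_apply, show f v = parent v hv from dif_neg hv]
  · have key : ∀ x y, x ≠ y → f x = y → G.Adj x y := by
      intro x y hne hxy
      have hx : x ≠ z := by rintro rfl; exact hne (by simpa [f] using hxy)
      rw [← hxy, show f x = parent x hx from dif_neg hx]
      exact hadj x hx
    obtain ⟨hne, hxy | hyx⟩ := ofParentMap_adj.1 hxy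
    · exact key x y hne hxy
    · exact (key y x hne.symm hyx).symm

theorem IsTree.eq_of_le [Finite V] {G H : SimpleGraph V} (hG : G.IsTree) (hH : H.IsTree)
    (hle : G ≤ H) : G = H := by
  have hG' := (isTree_iff_connected_and_card.1 hG).2
  have hH' := (isTree_iff_connected_and_card.1 hH).2
  rw [← edgeSet_inj]
  refine Set.eq_of_subset_of_ncard_le (edgeSet_mono hle) ?_ (Set.toFinite _)
  rw [← Nat.card_coe_set_eq, ← Nat.card_coe_set_eq]
  omega

noncomputable def rootedForestEquivTree [Finite V] (z : V) :
    {f : V → V // IsRootedForest {z} f} ≃ {T : SimpleGraph V // T.IsTree} :=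
  Equiv.ofBijective (fun f => ⟨ofParentMap f.1, f.2.isTree_ofParentMap⟩)
    ⟨fun f g h => Subtype.ext (f.2.eq_of_ofParentMap_eq g.2 (congrArg Subtype.val h)), fun T => by
      obtain ⟨f, hf, hle⟩ := T.2.connected.exists_isRootedForest_ofParentMap_le z
      exact ⟨⟨f, hf⟩, Subtype.ext (hf.isTree_ofParentMap.eq_of_le T.2 hle)⟩⟩

end SimpleGraph

theorem Vertebrate.card_eq_card_mul_card_mul_card_isTree (S : Type*) [Finite S] :
    Nat.card (Vertebrate S) =
      Nat.card S * (Nat.card S * Nat.card {T : SimpleGraph S // T.IsTree}) := by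
  let e : Vertebrate S ≃ S × Σ r : S, {f : S → S // IsRootedForest {r} f} :=
    { toFun := fun v => (v.head, ⟨v.root, v.parent, v.isRootedForest⟩)
      invFun := fun p => ⟨p.1, p.2.1, p.2.2.1, p.2.2.2⟩ }
  rw [Nat.card_congr (e.trans (Equiv.prodCongr (Equiv.refl S)
    ((Equiv.sigmaCongrRight SimpleGraph.rootedForestEquivTree).trans (Equiv.sigmaEquivProd _ _)))),
    Nat.card_prod, Nat.card_prod]

theorem eq_pow_sub_two_of_mul_mul_eq_pow_self {n T : ℕ} (hn : 0 < n) (h : n * (n * T) = n ^ n) :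
    T = n ^ (n - 2) := by
  rcases Nat.lt_or_ge n 2 with hn2 | hn2
  · obtain rfl : n = 1 := by omega
    simpa using h
  · have hpow : n ^ n = n * (n * n ^ (n - 2)) := by
      rw [← pow_succ', ← pow_succ', show n - 2 + 1 + 1 = n by omega]
    rw [hpow] at h
    exact Nat.eq_of_mul_eq_mul_left hn (Nat.eq_of_mul_eq_mul_left hn h)

theorem SimpleGraph.card_isTree (V : Type*) [Finite V] [Nonempty V] :
    Nat.card {T : SimpleGraph V // T.IsTree} = Nat.card V ^ (Nat.card V - 2) :=
  eq_pow_sub_two_of_mul_mul_eq_pow_self Nat.card_pos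
    ((Vertebrate.card_eq_card_mul_card_mul_card_isTree V).symm.trans
      Vertebrate.card_eq_card_pow_card)

/-- **Cayley's formula.** The number of spanning trees of the complete graph on `p ≥ 1`
labeled vertices (i.e. of trees on the vertex set `Fin p`) is `p ^ (p - 2)`. -/
theorem cayley_formula (p : ℕ) (hp : 1 ≤ p) :
    Nat.card {T : SimpleGraph (Fin p) // T.IsTree} = p ^ (p - 2) := by
  have : Nonempty (Fin p) := ⟨⟨0, hp⟩⟩
  simpa using SimpleGraph.card_isTree (Fin p)
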